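/- Fix θ > 0. For each δ > 0 let σ(δ) > θ and define the average energy of the measured filter output Ê(δ) = Σ over those k ∈ ℕ₀ with σ(δ)² e^{−(2k+1)δ} > θ² of σ(δ)² e^{−(2k+1)δ}, and the capacity (in nats per transmission) C(δ) = Σ_{k=0}^∞ max(0, (1/2)·ln(σ(δ)² e^{−(2k+1)δ}/θ²)). Assume δ·Ê(δ) stays bounded as δ → 0+. Then C(δ)/coth δ − (1/2)·[ln √(1 + Ê(δ)/((coth δ/2)·θ²))]² → 0 as δ → 0+. -/

import Mathlib

/-!
With `L = log (σ² / θ²)`, subchannel `k` is active iff `(2k + 1) δ < L`, so only the first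
`K ≈ L / (2δ)` subchannels contribute and both sums are elementary: with `u = 2Kδ`, which lies
within `δ` of `L`, one gets `C = u (2L - u) / (8δ)` and `Ê = θ² (e^L - e^{L-u}) / (2 sinh δ)`.
The bound on `δ Ê` keeps `L` bounded, and then `u - L → 0`, `tanh δ / δ → 1`, `cosh δ → 1` make
both `C / coth δ` and `(1/8) log² (1 + 2 Ê tanh δ / θ²)` differ from `L² / 8` by `o(1)`.
-/

open Real Filter Set Topology Finset

/-- The paper's number `K` of active subchannels at log-ratio `L = log (σ² / θ²)`. -/
noncomputable def activeCount (L δ : ℝ) : ℕ := ⌈(L - δ) / (2 * δ)⌉₊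

section
variable {L δ : ℝ}

lemma lt_activeCount_iff (hδ : 0 < δ) {k : ℕ} :
    k < activeCount L δ ↔ (2 * k + 1) * δ < L := by
  rw [activeCount, Nat.lt_ceil, lt_div_iff₀ (by positivity)]
  constructor <;> intro h <;> linarith

lemma abs_two_mul_activeCount_mul_sub_le (hδ : 0 < δ) (hL : 0 ≤ L) :
    |2 * activeCount L δ * δ - L| ≤ δ := by
  rw [abs_le]
  rcases lt_or_ge (L - δ) 0 with hneg | hnonneg
  · have hK : activeCount L δ = 0 :=
      Nat.ceil_eq_zero.mpr (div_nonpos_of_nonpos_of_nonneg hneg.le (by positivity))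
    rw [hK]
    constructor <;> push_cast <;> linarith
  · have hle : (L - δ) / (2 * δ) ≤ activeCount L δ := Nat.le_ceil _
    have hlt : (activeCount L δ : ℝ) < (L - δ) / (2 * δ) + 1 := Nat.ceil_lt_add_one (by positivity)
    rw [div_le_iff₀ (by positivity)] at hle
    rw [← sub_lt_iff_lt_add, lt_div_iff₀ (by positivity)] at hlt
    constructor <;> nlinarith

lemma sum_range_two_mul_add_one (n : ℕ) : ∑ k ∈ range n, (2 * (k : ℝ) + 1) = n ^ 2 := by
  induction n with
  | zero => simp
  | succ n ih => rw [sum_range_succ, ih]; push_cast; ring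

lemma sum_range_exp_sub_odd_mul (hδ : δ ≠ 0) (L : ℝ) (n : ℕ) :
    ∑ k ∈ range n, exp (L - (2 * k + 1) * δ) = (exp L - exp (L - 2 * n * δ)) / (2 * sinh δ) := by
  have hsinh : sinh δ ≠ 0 := sinh_ne_zero.mpr hδ
  induction n with
  | zero => simp
  | succ n ih =>
    rw [sum_range_succ, ih, div_add' _ _ _ (by positivity), sinh_eq]
    have h₁ : exp (L - (2 * n + 1) * δ) * exp δ = exp (L - 2 * n * δ) := by
      rw [← exp_add]; ring_nf
    have h₂ : exp (L - (2 * n + 1) * δ) * exp (-δ) = exp (L - 2 * (n + 1) * δ) := by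
      rw [← exp_add]; ring_nf
    push_cast
    congr 1
    linear_combination h₁ - h₂

lemma tsum_max_zero_half_mul_sub (hδ : 0 < δ) (L : ℝ) :
    ∑' k : ℕ, max 0 ((1 / 2) * (L - (2 * k + 1) * δ)) =
      activeCount L δ * (L - activeCount L δ * δ) / 2 := by
  have hterm (k : ℕ) : max 0 ((1 / 2) * (L - (2 * k + 1) * δ)) =
      if k < activeCount L δ then (1 / 2) * (L - (2 * k + 1) * δ) else 0 := by
    split_ifs with h <;> rw [lt_activeCount_iff hδ] at h
    · exact max_eq_right (by linarith)
    · exact max_eq_left (by linarith [not_lt.mp h])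
  simp_rw [hterm]
  rw [tsum_eq_sum (s := range (activeCount L δ)) (fun k hk => if_neg (by simpa using hk)),
    sum_congr rfl fun k hk => if_pos (mem_range.mp hk)]
  have h := sum_range_two_mul_add_one (activeCount L δ)
  simp only [← mul_sum, sum_sub_distrib, sum_const, card_range, nsmul_eq_mul, ← sum_mul, h]
  ring

lemma tsum_indicator_mul_exp_sub {c : ℝ} (hc : 0 < c) (hδ : 0 < δ) (L : ℝ) :
    ∑' k : ℕ, {k : ℕ | c < c * exp (L - (2 * k + 1) * δ)}.indicator
        (fun k : ℕ => c * exp (L - (2 * k + 1) * δ)) k =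
      c * (exp L - exp (L - 2 * activeCount L δ * δ)) / (2 * sinh δ) := by
  have hset : {k : ℕ | c < c * exp (L - (2 * k + 1) * δ)} = ↑(range (activeCount L δ)) := by
    ext k
    simp [lt_mul_iff_one_lt_right hc, lt_activeCount_iff hδ]
  rw [hset, tsum_eq_sum (s := range (activeCount L δ)) fun k hk => indicator_of_notMem hk _,
    sum_indicator_subset _ subset_rfl, ← mul_sum, sum_range_exp_sub_odd_mul hδ.ne', mul_div_assoc]

end

lemma sq_mul_exp_neg_eq {s θ : ℝ} (hs : s ≠ 0) (hθ : θ ≠ 0) (x : ℝ) :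
    s ^ 2 * exp (-x) = θ ^ 2 * exp (log (s ^ 2 / θ ^ 2) - x) := by
  rw [exp_sub, exp_log (by positivity), exp_neg]
  field_simp

lemma log_sq_mul_exp_neg_div_sq {s θ : ℝ} (hs : s ≠ 0) (hθ : θ ≠ 0) (x : ℝ) :
    log (s ^ 2 * exp (-x) / θ ^ 2) = log (s ^ 2 / θ ^ 2) - x := by
  rw [sq_mul_exp_neg_eq hs hθ, mul_div_cancel_left₀ _ (by positivity), log_exp]

lemma tsum_indicator_sq_mul_exp_neg {θ s δ : ℝ} (hθ : θ ≠ 0) (hs : s ≠ 0) (hδ : 0 < δ) :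
    ∑' k : ℕ, {k : ℕ | θ ^ 2 < s ^ 2 * exp (-((2 * k + 1) * δ))}.indicator
        (fun k : ℕ => s ^ 2 * exp (-((2 * k + 1) * δ))) k =
      θ ^ 2 * (exp (log (s ^ 2 / θ ^ 2)) - exp (log (s ^ 2 / θ ^ 2) -
        2 * activeCount (log (s ^ 2 / θ ^ 2)) δ * δ)) / (2 * sinh δ) := by
  simp only [sq_mul_exp_neg_eq hs hθ]
  exact tsum_indicator_mul_exp_sub (by positivity) hδ _

lemma tsum_max_zero_half_mul_log {θ s δ : ℝ} (hθ : θ ≠ 0) (hs : s ≠ 0) (hδ : 0 < δ) :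
    ∑' k : ℕ, max 0 ((1 / 2) * log (s ^ 2 * exp (-((2 * k + 1) * δ)) / θ ^ 2)) =
      activeCount (log (s ^ 2 / θ ^ 2)) δ *
        (log (s ^ 2 / θ ^ 2) - activeCount (log (s ^ 2 / θ ^ 2)) δ * δ) / 2 := by
  simp only [log_sq_mul_exp_neg_div_sq hs hθ]
  exact tsum_max_zero_half_mul_sub hδ _

lemma capacity_div_coth_sub_eq {θ δ L K : ℝ} (hθ : θ ≠ 0) (hδ : 0 < δ) (hK : 0 ≤ K) :
    K * (L - K * δ) / 2 / (cosh δ / sinh δ) - 1 / 2 * log (√(1 + θ ^ 2 *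
        (exp L - exp (L - 2 * K * δ)) / (2 * sinh δ) / (cosh δ / sinh δ / 2 * θ ^ 2))) ^ 2 =
      (2 * K * δ * (2 * L - 2 * K * δ) * (sinh δ / δ / cosh δ) -
        log (1 + (exp L - exp (L - 2 * K * δ)) / cosh δ) ^ 2) / 8 := by
  have hcosh₀ : 0 < cosh δ := cosh_pos δ
  have hsinh₀ : 0 < sinh δ := sinh_pos_iff.mpr hδ
  have hx : θ ^ 2 * (exp L - exp (L - 2 * K * δ)) / (2 * sinh δ) / (cosh δ / sinh δ / 2 * θ ^ 2) =
      (exp L - exp (L - 2 * K * δ)) / cosh δ := by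
    field_simp
  have hx₀ : 0 ≤ (exp L - exp (L - 2 * K * δ)) / cosh δ :=
    div_nonneg (sub_nonneg.mpr (exp_le_exp.mpr (by nlinarith))) hcosh₀.le
  rw [hx, log_sqrt (by linarith)]
  field_simp
  ring

lemma tendsto_sinh_div_self : Tendsto (fun δ => sinh δ / δ) (𝓝[≠] 0) (𝓝 1) := by
  simpa [div_eq_inv_mul] using (hasDerivAt_sinh 0).tendsto_slope_zero

lemma tendsto_sinh_div_self_div_cosh : Tendsto (fun δ => sinh δ / δ / cosh δ) (𝓝[≠] 0) (𝓝 1) := by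
  rw [← div_one 1]
  exact tendsto_sinh_div_self.div
    ((continuous_cosh.tendsto' 0 1 cosh_zero).mono_left nhdsWithin_le_nhds) one_ne_zero

lemma tendsto_two_mul_activeCount_mul_sub {L : ℝ → ℝ} (hL : ∀ δ > 0, 0 ≤ L δ) :
    Tendsto (fun δ => 2 * activeCount (L δ) δ * δ - L δ) (𝓝[>] 0) (𝓝 0) := by
  refine squeeze_zero_norm' ?_ (tendsto_nhdsWithin_of_tendsto_nhds tendsto_id)
  filter_upwards [self_mem_nhdsWithin] with δ (hδ : 0 < δ)
  exact abs_two_mul_activeCount_mul_sub_le hδ (hL δ hδ)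

section
variable {α : Type*} {l : Filter α} {L u c T : α → ℝ} {B : ℝ}

lemma tendsto_log_one_add_sub (hL : ∀ᶠ a in l, |L a| ≤ B)
    (hu : Tendsto (fun a => u a - L a) l (𝓝 0)) (hc : Tendsto c l (𝓝 1)) :
    Tendsto (fun a => log (1 + (exp (L a) - exp (L a - u a)) / c a) - L a) l (𝓝 0) := by
  have hexp : Tendsto (fun a => 1 - exp (L a - u a) / c a) l (𝓝 0) := by
    have hLu : Tendsto (fun a => L a - u a) l (𝓝 0) := by simpa using hu.neg
    simpa using (tendsto_const_nhds (x := (1 : ℝ))).sub (hLu.rexp.div hc one_ne_zero)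
  have hbdd : IsBoundedUnder (· ≤ ·) l (norm ∘ fun a => exp (-L a)) :=
    isBoundedUnder_of_eventually_le (a := exp B) <| hL.mono fun a ha => by
      simpa using (neg_le_abs (L a)).trans ha
  -- this is `(1 + x) e^{-L}`, the quantity whose logarithm is `log (1 + x) - L`
  have hw : Tendsto (fun a => exp (-L a) * (1 - exp (L a - u a) / c a) + (c a)⁻¹) l (𝓝 1) := by
    simpa using (isBoundedUnder_le_mul_tendsto_zero hbdd hexp).add (hc.inv₀ one_ne_zero)
  have hlog : Tendsto (fun a => log (exp (-L a) * (1 - exp (L a - u a) / c a) + (c a)⁻¹)) l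
      (𝓝 0) := by
    simpa using hw.log one_ne_zero
  refine hlog.congr' ?_
  filter_upwards [hw.eventually (lt_mem_nhds one_pos), hc.eventually (lt_mem_nhds one_pos)]
    with a hwa hca
  have hfac : exp (-L a) * (1 - exp (L a - u a) / c a) + (c a)⁻¹ =
      (1 + (exp (L a) - exp (L a - u a)) / c a) * exp (-L a) := by
    rw [exp_sub, exp_neg]
    field_simp
    ring
  rw [hfac] at hwa ⊢
  rw [log_mul (left_ne_zero_of_mul (ne_of_gt hwa)) (exp_ne_zero _), log_exp]
  ring

lemma tendsto_mul_two_mul_sub_mul_sub_log_sq (hL : ∀ᶠ a in l, |L a| ≤ B)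
    (hu : Tendsto (fun a => u a - L a) l (𝓝 0)) (hT : Tendsto T l (𝓝 1))
    (hc : Tendsto c l (𝓝 1)) :
    Tendsto (fun a => u a * (2 * L a - u a) * T a -
      log (1 + (exp (L a) - exp (L a - u a)) / c a) ^ 2) l (𝓝 0) := by
  set e := fun a => log (1 + (exp (L a) - exp (L a - u a)) / c a) - L a
  have he : Tendsto e l (𝓝 0) := tendsto_log_one_add_sub hL hu hc
  have hL2 : IsBoundedUnder (· ≤ ·) l (norm ∘ fun a => L a ^ 2) :=
    isBoundedUnder_of_eventually_le (a := B ^ 2) <| hL.mono fun a ha => by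
      simpa using pow_le_pow_left₀ (abs_nonneg _) ha 2
  have h2L : IsBoundedUnder (· ≤ ·) l (norm ∘ fun a => 2 * L a) :=
    isBoundedUnder_of_eventually_le (a := 2 * B) <| hL.mono fun a ha => by simpa using ha
  have hT1 : Tendsto (fun a => T a - 1) l (𝓝 0) := by simpa using hT.sub_const 1
  -- `u (2L - u) = L² - (u - L)²` and `log (1 + x) = L + e`
  have hlim := ((isBoundedUnder_le_mul_tendsto_zero hL2 hT1).sub
    ((hu.pow 2).mul hT)).sub ((isBoundedUnder_le_mul_tendsto_zero h2L he).add (he.pow 2))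
  norm_num at hlim
  refine hlim.congr fun a => ?_
  simp only [e]
  ring

end

lemma exp_le_of_mul_energy_le {θ δ L u M : ℝ} (hθ : 0 < θ) (hδ : 0 < δ)
    (hsinh : sinh δ ≤ 2 * δ) (hu₀ : 0 ≤ u) (hu : exp (L - u) ≤ 2)
    (hM : δ * (θ ^ 2 * (exp L - exp (L - u)) / (2 * sinh δ)) ≤ M) :
    exp L ≤ 2 + 4 * M / θ ^ 2 := by
  have hD : 0 ≤ exp L - exp (L - u) := sub_nonneg.mpr (exp_le_exp.mpr (by linarith))
  have hsinh₀ : 0 < sinh δ := sinh_pos_iff.mpr hδ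
  have h : θ ^ 2 * (exp L - exp (L - u)) / 4 ≤ M := calc
    θ ^ 2 * (exp L - exp (L - u)) / 4 = δ * (θ ^ 2 * (exp L - exp (L - u))) / (4 * δ) := by
      field_simp
    _ ≤ δ * (θ ^ 2 * (exp L - exp (L - u))) / (2 * sinh δ) :=
      div_le_div_of_nonneg_left (by positivity) (by positivity) (by linarith)
    _ ≤ M := by rwa [mul_div_assoc]
  have hD' : exp L - exp (L - u) ≤ 4 * M / θ ^ 2 := by
    rw [le_div_iff₀ (by positivity)]
    linarith
  linarith

lemma eventually_abs_le_of_mul_energy_le {θ M : ℝ} {L u E : ℝ → ℝ} (hθ : 0 < θ)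
    (hL : ∀ δ > 0, 0 ≤ L δ) (hu₀ : ∀ δ > 0, 0 ≤ u δ)
    (hu : Tendsto (fun δ => u δ - L δ) (𝓝[>] 0) (𝓝 0))
    (hE : ∀ δ > 0, E δ = θ ^ 2 * (exp (L δ) - exp (L δ - u δ)) / (2 * sinh δ))
    (hM : ∀ᶠ δ in 𝓝[>] 0, δ * E δ ≤ M) :
    ∀ᶠ δ in 𝓝[>] 0, |L δ| ≤ 2 + 4 * M / θ ^ 2 := by
  have hsinh := tendsto_sinh_div_self.mono_left (nhdsGT_le_nhdsNE 0)
  have hexp : Tendsto (fun δ => exp (L δ - u δ)) (𝓝[>] 0) (𝓝 1) := by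
    simpa using hu.neg.rexp
  filter_upwards [self_mem_nhdsWithin, hM, hsinh.eventually (gt_mem_nhds one_lt_two),
    hexp.eventually (gt_mem_nhds one_lt_two)] with δ (hδ : 0 < δ) hMδ hsδ heδ
  rw [hE δ hδ] at hMδ
  rw [abs_of_nonneg (hL δ hδ)]
  linarith [add_one_le_exp (L δ), exp_le_of_mul_energy_le hθ hδ ((div_lt_iff₀ hδ).mp hsδ).le
    (hu₀ δ hδ) heδ.le hMδ]

theorem heat_channel_capacity_second_formula
    (θ : ℝ) (hθ : 0 < θ)
    (σ : ℝ → ℝ) (hσ : ∀ δ > 0, θ < σ δ)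
    (Ehat C : ℝ → ℝ)
    (hE : ∀ δ > 0, Ehat δ =
      ∑' k : ℕ,
        Set.indicator {k : ℕ | θ ^ 2 < σ δ ^ 2 * Real.exp (-((2 * (k : ℝ) + 1) * δ))}
          (fun k : ℕ => σ δ ^ 2 * Real.exp (-((2 * (k : ℝ) + 1) * δ))) k)
    (hC : ∀ δ > 0, C δ =
      ∑' k : ℕ, max 0 ((1 / 2) *
        Real.log (σ δ ^ 2 * Real.exp (-((2 * (k : ℝ) + 1) * δ)) / θ ^ 2)))
    (hbound : ∃ M : ℝ, ∀ᶠ δ in nhdsWithin 0 (Set.Ioi 0), δ * Ehat δ ≤ M) :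
    Filter.Tendsto
      (fun δ : ℝ =>
        C δ / (Real.cosh δ / Real.sinh δ) -
          (1 / 2) *
            (Real.log (Real.sqrt (1 + Ehat δ / ((Real.cosh δ / Real.sinh δ / 2) * θ ^ 2)))) ^ 2)
      (nhdsWithin 0 (Set.Ioi 0)) (nhds 0) := by
  obtain ⟨M, hM⟩ := hbound
  have hσ₀ : ∀ δ > 0, σ δ ≠ 0 := fun δ hδ => (hθ.trans (hσ δ hδ)).ne'
  set L : ℝ → ℝ := fun δ => log (σ δ ^ 2 / θ ^ 2)
  set K : ℝ → ℕ := fun δ => activeCount (L δ) δ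
  have hL₀ : ∀ δ > 0, 0 ≤ L δ := fun δ hδ => log_nonneg <| (one_le_div (by positivity)).mpr <|
    pow_le_pow_left₀ hθ.le (hσ δ hδ).le 2
  have hEL : ∀ δ > 0, Ehat δ = θ ^ 2 * (exp (L δ) - exp (L δ - 2 * K δ * δ)) / (2 * sinh δ) :=
    fun δ hδ => (hE δ hδ).trans (tsum_indicator_sq_mul_exp_neg hθ.ne' (hσ₀ δ hδ) hδ)
  have hCL : ∀ δ > 0, C δ = K δ * (L δ - K δ * δ) / 2 :=
    fun δ hδ => (hC δ hδ).trans (tsum_max_zero_half_mul_log hθ.ne' (hσ₀ δ hδ) hδ)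
  have hu := tendsto_two_mul_activeCount_mul_sub hL₀
  have hLB := eventually_abs_le_of_mul_energy_le hθ hL₀ (fun δ hδ => by positivity) hu hEL hM
  have hlim := (tendsto_mul_two_mul_sub_mul_sub_log_sq hLB hu
    (tendsto_sinh_div_self_div_cosh.mono_left (nhdsGT_le_nhdsNE 0))
    ((continuous_cosh.tendsto' 0 1 cosh_zero).mono_left nhdsWithin_le_nhds)).div_const 8
  rw [zero_div] at hlim
  refine hlim.congr' ?_
  filter_upwards [self_mem_nhdsWithin] with δ (hδ : 0 < δ)
  rw [hCL δ hδ, hEL δ hδ]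
  exact (capacity_div_coth_sub_eq hθ.ne' hδ (K δ).cast_nonneg).symm
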